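/- arXiv:1707.05282 — 2 statements merged into one kernel-verified Lean document; each statement's English description precedes it below -/
import Mathlib

section
/- If W is a (k+1)-level coherence witness (i.e., ⟨φ|W|φ⟩ ≥ 0 for all pure states φ with coherence rank ≤ k), then its smallest eigenvalue satisfies λ_min(W) ≥ −((d−k)/k) λ_max(W). -/
open Matrix BigOperators ComplexOrder

noncomputable section

/-- coherence rank of a vector: number of nonzero coefficients in the fixed basis -/
def cohRank {d : ℕ} (v : Fin d → ℂ) : ℕ :=
  (Finset.univ.filter (fun i => v i ≠ 0)).card

/-!
Let `x` be a unit eigenvector for `λ_min` and `D = ∑ᵢ |xᵢ|² Wᵢᵢ`. Averaging the witness inequality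
over the restrictions of `x` to all `k`-subsets of coordinates (each coordinate lies in
`C(d-1, k-1)` of them, each pair of coordinates in `C(d-2, k-2)`) gives `(k-1) λ_min + (d-k) D ≥ 0`,
while summing the Rayleigh bound `⟨v|W|v⟩ ≤ λ_max ‖v‖²` over the vectors `xᵢ eᵢ - xⱼ eⱼ` gives
`d D ≤ λ_min + (d-1) λ_max`. Eliminating `D` leaves `(d-1) (k λ_min + (d-k) λ_max) ≥ 0`.
-/

open Finset

theorem Finset.card_filter_mem_powersetCard {α : Type*} [DecidableEq α]
    {s : Finset α} {a : α} (ha : a ∈ s) {k : ℕ} (hk : 1 ≤ k) :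
    #{S ∈ s.powersetCard k | a ∈ S} = (#s - 1).choose (k - 1) := by
  simpa using card_filter_powersetCard_subset {a} s k (by simpa) (by simpa)

theorem Finset.card_sub_one_mul_card_filter_mem_mem_powersetCard {α : Type*} [DecidableEq α]
    {s : Finset α} {a b : α} (ha : a ∈ s) (hb : b ∈ s) (hab : a ≠ b) {k : ℕ} (hk : 1 ≤ k) :
    (#s - 1) * #{S ∈ s.powersetCard k | a ∈ S ∧ b ∈ S} =
      (k - 1) * #{S ∈ s.powersetCard k | a ∈ S} := by
  obtain rfl | hk2 : k = 1 ∨ 2 ≤ k := by omega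
  · simp only [Nat.sub_self, zero_mul, mul_eq_zero, card_eq_zero, filter_eq_empty_iff,
      mem_powersetCard, card_eq_one]
    right
    rintro S ⟨-, c, rfl⟩ ⟨hac, hbc⟩
    exact hab ((mem_singleton.1 hac).trans (mem_singleton.1 hbc).symm)
  · have hpair : #{S ∈ s.powersetCard k | a ∈ S ∧ b ∈ S} = (#s - 2).choose (k - 2) := by
      simpa [insert_subset_iff, hab] using
        card_filter_powersetCard_subset {a, b} s k (by simp [insert_subset_iff, ha, hb])
          (by simpa [hab])
    have hs : 1 < #s := one_lt_card.2 ⟨a, ha, b, hb, hab⟩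
    obtain ⟨n, hn⟩ : ∃ n, #s = n + 2 := ⟨#s - 2, by omega⟩
    obtain ⟨l, rfl⟩ : ∃ l, k = l + 2 := ⟨k - 2, by omega⟩
    rw [card_filter_mem_powersetCard ha hk, hpair, hn]
    simpa [mul_comm] using Nat.add_one_mul_choose_eq n l

theorem Fintype.cast_card_sub_one_mul_card_filter_mem_mem_powersetCard_univ {ι : Type*}
    [Fintype ι] [DecidableEq ι] (R : Type*) [CommRing R] {k : ℕ} (hk : 1 ≤ k) (i j : ι) :
    ((Fintype.card ι : R) - 1) * #{S ∈ univ.powersetCard k | i ∈ S ∧ j ∈ S} =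
      (Fintype.card ι - 1).choose (k - 1) *
        ((k - 1 : R) + if i = j then (Fintype.card ι - k : R) else 0) := by
  have hN := card_filter_mem_powersetCard (mem_univ i) hk (s := univ)
  rw [card_univ] at hN
  split_ifs with hij
  · subst hij
    simp only [and_self, hN]
    ring
  · have hn : 1 ≤ Fintype.card ι := Fintype.card_pos_iff.2 ⟨i⟩
    have h := card_sub_one_mul_card_filter_mem_mem_powersetCard (mem_univ i) (mem_univ j) hij hk
    rw [card_univ, hN] at h
    have h' := congrArg (Nat.cast (R := R)) h
    push_cast [Nat.cast_sub hn, Nat.cast_sub hk] at h'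
    rw [h']
    ring

namespace Matrix

variable {ι : Type*} [Fintype ι] [DecidableEq ι]

section CommRing

variable {R : Type*} [CommRing R] [StarRing R]

theorem card_sub_one_mul_sum_powersetCard_dotProduct_mulVec_indicator
    (W : Matrix ι ι R) (x : ι → R) {k : ℕ} (hk : 1 ≤ k) :
    ((Fintype.card ι : R) - 1) * ∑ S ∈ (univ : Finset ι).powersetCard k,
        star ((S : Set ι).indicator x) ⬝ᵥ W *ᵥ (S : Set ι).indicator x =
      (Fintype.card ι - 1).choose (k - 1) * ((k - 1 : R) * (star x ⬝ᵥ W *ᵥ x) +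
        (Fintype.card ι - k : R) * ∑ i, star (x i) * W i i * x i) := by
  have hS : ∀ S : Finset ι, star ((S : Set ι).indicator x) ⬝ᵥ W *ᵥ (S : Set ι).indicator x =
      ∑ j, ∑ i, if i ∈ S ∧ j ∈ S then star (x i) * W i j * x j else 0 := by
    intro S
    rw [dot_mulVec_eq_sum_sum]
    refine sum_congr rfl fun j _ => sum_congr rfl fun i _ => ?_
    by_cases hi : i ∈ S <;> by_cases hj : j ∈ S <;> simp [hi, hj]
  simp only [hS]
  rw [sum_comm, mul_sum]
  simp_rw [sum_comm (γ := Finset ι), ← sum_filter, sum_const, nsmul_eq_mul, mul_sum, ← mul_assoc,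
    Fintype.cast_card_sub_one_mul_card_filter_mem_mem_powersetCard_univ R hk,
    dot_mulVec_eq_sum_sum]
  simp only [mul_add, add_mul, sum_add_distrib, ite_mul, zero_mul, mul_ite, mul_zero, sum_ite_eq',
    mem_univ, if_true, mul_sum, mul_assoc, Pi.star_apply]

theorem dotProduct_mulVec_single_sub_single (W : Matrix ι ι R) (i j : ι) (a b : R) :
    star (Pi.single i a - Pi.single j b) ⬝ᵥ W *ᵥ (Pi.single i a - Pi.single j b) =
      star a * W i i * a + star b * W j j * b - (star a * W i j * b + star b * W j i * a) := by
  simp only [star_sub, ← Pi.single_star, sub_dotProduct, single_dotProduct, mulVec_sub,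
    Pi.sub_apply, mulVec_single, Pi.smul_apply, col_apply, MulOpposite.smul_eq_mul_unop,
    MulOpposite.unop_op]
  ring

theorem sum_sum_dotProduct_mulVec_single_sub_single (W : Matrix ι ι R) (x : ι → R) :
    ∑ i, ∑ j, star (Pi.single i (x i) - Pi.single j (x j)) ⬝ᵥ
        W *ᵥ (Pi.single i (x i) - Pi.single j (x j)) =
      2 * Fintype.card ι * ∑ i, star (x i) * W i i * x i - 2 * (star x ⬝ᵥ W *ᵥ x) := by
  have hq : ∑ i, ∑ j, star (x j) * W j i * x i = star x ⬝ᵥ W *ᵥ x :=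
    (dot_mulVec_eq_sum_sum _ _ _).symm
  have hq' : ∑ i, ∑ j, star (x i) * W i j * x j = star x ⬝ᵥ W *ᵥ x := by
    rw [sum_comm]
    exact hq
  simp only [dotProduct_mulVec_single_sub_single, sum_sub_distrib, sum_add_distrib, sum_const,
    card_univ, nsmul_eq_mul, ← mul_sum, hq, hq']
  ring

end CommRing

variable {𝕜 : Type*} [RCLike 𝕜]

theorem nonneg_of_forall_re_dotProduct_mulVec_indicator_nonneg
    (W : Matrix ι ι 𝕜) (x : ι → 𝕜) {k : ℕ} (hk : 1 ≤ k) (hkn : k < Fintype.card ι)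
    (h : ∀ S ∈ (univ : Finset ι).powersetCard k,
      0 ≤ RCLike.re (star ((S : Set ι).indicator x) ⬝ᵥ W *ᵥ (S : Set ι).indicator x)) :
    0 ≤ (k - 1 : ℝ) * RCLike.re (star x ⬝ᵥ W *ᵥ x) +
      (Fintype.card ι - k : ℝ) * RCLike.re (∑ i, star (x i) * W i i * x i) := by
  have hid := congrArg RCLike.re
    (card_sub_one_mul_sum_powersetCard_dotProduct_mulVec_indicator W x hk)
  rw [← RCLike.ofReal_natCast (K := 𝕜) (Fintype.card ι), ← RCLike.ofReal_natCast (K := 𝕜) k,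
    ← RCLike.ofReal_natCast (K := 𝕜) (Nat.choose _ _), ← RCLike.ofReal_one] at hid
  simp only [← RCLike.ofReal_sub, RCLike.re_ofReal_mul, map_add] at hid
  have hsum : 0 ≤ RCLike.re (∑ S ∈ (univ : Finset ι).powersetCard k,
      star ((S : Set ι).indicator x) ⬝ᵥ W *ᵥ (S : Set ι).indicator x) := by
    rw [map_sum]
    exact sum_nonneg h
  have hC : (0 : ℝ) < (Fintype.card ι - 1).choose (k - 1) := by
    exact_mod_cast Nat.choose_pos (by omega)
  have hn : (1 : ℝ) ≤ Fintype.card ι := by exact_mod_cast (show 1 ≤ Fintype.card ι by omega)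
  refine nonneg_of_mul_nonneg_right ?_ hC
  rw [← hid]
  exact mul_nonneg (by linarith) hsum

namespace IsHermitian

variable {W : Matrix ι ι 𝕜}

open scoped MatrixOrder in
theorem re_dotProduct_mulVec_le_iSup_eigenvalues_mul (hW : W.IsHermitian) (v : ι → 𝕜) :
    RCLike.re (star v ⬝ᵥ W *ᵥ v) ≤ (⨆ i, hW.eigenvalues i) * RCLike.re (star v ⬝ᵥ v) := by
  have hle : W ≤ algebraMap ℝ (Matrix ι ι 𝕜) (⨆ i, hW.eigenvalues i) := by
    refine le_algebraMap_of_spectrum_le fun r hr => ?_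
    rw [hW.spectrum_real_eq_range_eigenvalues] at hr
    obtain ⟨i, rfl⟩ := hr
    exact le_ciSup (Set.finite_range _).bddAbove i
  have h := RCLike.nonneg_iff.1 ((Matrix.le_iff.1 hle).dotProduct_mulVec_nonneg v)
  simpa [Algebra.algebraMap_eq_smul_one, sub_mulVec, smul_mulVec, dotProduct_sub, dotProduct_smul,
    RCLike.smul_re] using h.1

theorem card_mul_re_sum_diag_le (hW : W.IsHermitian) (x : ι → 𝕜) :
    Fintype.card ι * RCLike.re (∑ i, star (x i) * W i i * x i) ≤
      RCLike.re (star x ⬝ᵥ W *ᵥ x) +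
        (Fintype.card ι - 1) * (⨆ i, hW.eigenvalues i) * RCLike.re (star x ⬝ᵥ x) := by
  have hone := sum_sum_dotProduct_mulVec_single_sub_single (1 : Matrix ι ι 𝕜) x
  simp only [one_apply_eq, mul_one, one_mulVec] at hone
  have hsum : RCLike.re (∑ i, ∑ j, star (Pi.single i (x i) - Pi.single j (x j)) ⬝ᵥ
        W *ᵥ (Pi.single i (x i) - Pi.single j (x j))) ≤
      (⨆ i, hW.eigenvalues i) * RCLike.re (∑ i, ∑ j,
        star (Pi.single i (x i) - Pi.single j (x j) : ι → 𝕜) ⬝ᵥ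
          (Pi.single i (x i) - Pi.single j (x j))) := by
    simp only [map_sum, mul_sum]
    exact sum_le_sum fun i _ => sum_le_sum fun j _ =>
      hW.re_dotProduct_mulVec_le_iSup_eigenvalues_mul _
  have hxx : ∑ i, star (x i) * x i = star x ⬝ᵥ x := rfl
  rw [sum_sum_dotProduct_mulVec_single_sub_single, hone, hxx,
    ← RCLike.ofReal_natCast (K := 𝕜), show (2 : 𝕜) = ((2 : ℝ) : 𝕜) by norm_cast] at hsum
  simp only [← RCLike.ofReal_mul, map_sub, RCLike.re_ofReal_mul] at hsum
  linarith

end IsHermitian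

end Matrix

theorem cohRank_indicator_le {d : ℕ} (x : Fin d → ℂ) (S : Finset (Fin d)) :
    cohRank ((S : Set (Fin d)).indicator x) ≤ #S :=
  card_le_card fun i hi => (by simpa [cohRank] using hi : i ∈ S ∧ x i ≠ 0).1

theorem cohRank_smul {d : ℕ} {c : ℂ} (hc : c ≠ 0) (y : Fin d → ℂ) :
    cohRank (c • y) = cohRank y := by
  simp [cohRank, hc]

theorem re_dotProduct_mulVec_nonneg_of_cohRank_le {d k : ℕ} {W : Matrix (Fin d) (Fin d) ℂ}
    (hwit : ∀ φ : Fin d → ℂ, (∑ i, ‖φ i‖ ^ 2 = 1) → cohRank φ ≤ k →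
      0 ≤ dotProduct (star φ) (W.mulVec φ))
    {y : Fin d → ℂ} (hy : cohRank y ≤ k) : 0 ≤ (star y ⬝ᵥ W *ᵥ y).re := by
  obtain rfl | hy0 := eq_or_ne y 0
  · simp
  obtain ⟨i, hi⟩ := Function.ne_iff.1 hy0
  set r := ∑ i, ‖y i‖ ^ 2
  have hr : 0 < r :=
    sum_pos' (fun j _ => by positivity) ⟨i, mem_univ i, pow_pos (norm_pos_iff.2 hi) 2⟩
  set t := (√r)⁻¹
  have ht : 0 < t := by positivity
  have hφ : ∑ i, ‖((t : ℂ) • y) i‖ ^ 2 = 1 := by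
    simp only [Pi.smul_apply, smul_eq_mul, norm_mul, Complex.norm_real, Real.norm_of_nonneg ht.le,
      mul_pow, ← mul_sum]
    rw [inv_pow, Real.sq_sqrt hr.le, inv_mul_cancel₀ hr.ne']
  have hcoh : cohRank ((t : ℂ) • y) ≤ k := (cohRank_smul (by exact_mod_cast ht.ne') y).le.trans hy
  have hw := (Complex.nonneg_iff.1 (hwit _ hφ hcoh)).1
  rw [star_smul, mulVec_smul, dotProduct_smul, smul_dotProduct] at hw
  simp only [RCLike.star_def, Complex.conj_ofReal, smul_eq_mul, Complex.mul_re, Complex.ofReal_re,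
    Complex.ofReal_im, zero_mul, sub_zero] at hw
  exact nonneg_of_mul_nonneg_right (nonneg_of_mul_nonneg_right hw ht) ht

/-- If `⟨φ|W|φ⟩ ≥ 0` for all pure states `φ` with coherence rank at most `k`, then the
smallest eigenvalue of `W` satisfies `λ_min(W) ≥ -((d-k)/k) λ_max(W)`. -/
theorem stmt_13 {d k : ℕ} (hk : 1 ≤ k) (hkd : k ≤ d)
    (W : Matrix (Fin d) (Fin d) ℂ) (hW : W.IsHermitian)
    (hwit : ∀ φ : Fin d → ℂ, (∑ i, ‖φ i‖ ^ 2 = 1) → cohRank φ ≤ k →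
      0 ≤ dotProduct (star φ) (W.mulVec φ)) :
    (⨅ i, hW.eigenvalues i) ≥ -(((d : ℝ) - k) / k) * ⨆ i, hW.eigenvalues i := by
  have : Nonempty (Fin d) := ⟨⟨0, by omega⟩⟩
  obtain ⟨i₀, hi₀⟩ := exists_eq_ciInf_of_finite (f := hW.eigenvalues)
  set m := hW.eigenvalues i₀
  set x : Fin d → ℂ := ⇑(hW.eigenvectorBasis i₀)
  have hqx : (star x ⬝ᵥ W *ᵥ x).re = m := (hW.eigenvalues_eq i₀).symm
  have hxx : (star x ⬝ᵥ x).re = 1 := by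
    rw [dotProduct_comm, ← EuclideanSpace.inner_eq_star_dotProduct,
      hW.eigenvectorBasis.inner_eq_one]
    rfl
  have hk₁ : (1 : ℝ) ≤ k := by exact_mod_cast hk
  rw [← hi₀, ge_iff_le]
  obtain rfl | hkd := hkd.eq_or_lt
  · -- the elimination below divides by `d - 1`, so for `k = d` use `x` itself as a test vector
    have hm : 0 ≤ m := hqx ▸ re_dotProduct_mulVec_nonneg_of_cohRank_le hwit
      ((card_le_univ _).trans_eq (Fintype.card_fin _))
    simpa using hm
  have havg := nonneg_of_forall_re_dotProduct_mulVec_indicator_nonneg W x hk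
    (by simpa using hkd) fun S hS => re_dotProduct_mulVec_nonneg_of_cohRank_le hwit
      ((cohRank_indicator_le x S).trans (mem_powersetCard_univ.1 hS).le)
  have hdiag := hW.card_mul_re_sum_diag_le x
  simp only [Fintype.card_fin, RCLike.re_to_complex, hqx, hxx] at havg hdiag
  have hd : (k : ℝ) < d := by exact_mod_cast hkd
  have hkey : 0 ≤ k * m + (d - k) * ⨆ i, hW.eigenvalues i := by
    refine nonneg_of_mul_nonneg_right (a := (d : ℝ) - 1) ?_ (by linarith)
    nlinarith [mul_nonneg (by linarith : (0 : ℝ) ≤ d) havg,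
      mul_nonneg (by linarith : (0 : ℝ) ≤ d - k) (sub_nonneg.2 hdiag)]
  rw [neg_mul, neg_le, div_mul_eq_mul_div, le_div_iff₀ (by linarith)]
  linarith
end
end

section
/- For the noisy maximally coherent state ρ(p) = (1−p) I/d + p |ψ_d⁺⟩⟨ψ_d⁺|, the robustness of (k+1)-level coherence equals max{0, (p(d−1)−(k−1))/k}. In particular, ρ(p) ∈ C_k iff p ≤ (k−1)/(d−1). -/
open Matrix BigOperators ComplexOrder

noncomputable section

/-- projector onto the pure state with coefficient vector `v` -/
def pureProj {d : ℕ} (v : Fin d → ℂ) : Matrix (Fin d) (Fin d) ℂ :=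
  Matrix.vecMulVec v (star v)

/-- the set `C_k`: convex hull of pure-state projectors with coherence rank ≤ k -/
def Ck (d k : ℕ) : Set (Matrix (Fin d) (Fin d) ℂ) :=
  convexHull ℝ
    {M | ∃ v : Fin d → ℂ, (∑ i, ‖v i‖ ^ 2 = 1) ∧ cohRank v ≤ k ∧ M = pureProj v}

/-- density matrix predicate -/
def IsDensity {d : ℕ} (ρ : Matrix (Fin d) (Fin d) ℂ) : Prop :=
  ρ.PosSemidef ∧ ρ.trace = 1

/-- comparison matrix -/
def compMatrix {d : ℕ} (A : Matrix (Fin d) (Fin d) ℂ) : Matrix (Fin d) (Fin d) ℂ :=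
  fun i j => if i = j then (‖A i i‖ : ℂ) else -(‖A i j‖ : ℂ)

/-- robustness of (k+1)-level coherence -/
def RMC {d : ℕ} (k : ℕ) (ρ : Matrix (Fin d) (Fin d) ℂ) : ℝ :=
  sInf {s : ℝ | 0 ≤ s ∧ ∃ τ : Matrix (Fin d) (Fin d) ℂ, IsDensity τ ∧
    ((1 + s)⁻¹ : ℝ) • (ρ + (s : ℝ) • τ) ∈ Ck d k}

/-- the maximally coherent state `|ψ_d⁺⟩ = d^{-1/2} Σ_i |i⟩` -/
def psiPlus (d : ℕ) : Fin d → ℂ := fun _ => ((Real.sqrt d)⁻¹ : ℝ)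

/-!
The witness `F M = Re ∑ᵢⱼ Mᵢⱼ` (that is, `d ⟨ψ_d⁺|M|ψ_d⁺⟩`) takes the value `|∑ᵢ vᵢ|² ≤ k` on a
normalised pure state of coherence rank `≤ k` (Cauchy–Schwarz on its support), so `F ≤ k` on
`C_k`; moreover `F ≥ 0` on states and `F (ρ(p)) = 1 + p(d-1)`. This gives the lower bound on the
robustness and the necessity of `p ≤ p* = (k-1)/(d-1)`.

Conversely, averaging the uniform superpositions over all `k`-subsets of the basis gives exactly
`ρ(p*)`, so `ρ(p) ∈ C_k` for `0 ≤ p ≤ p*` by convexity. Finally the state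
`(I - |ψ_d⁺⟩⟨ψ_d⁺|)/(d-1)` is `ρ(-1/(d-1))`, and mixing `ρ(p)` with it at weight
`s = (p(d-1)-(k-1))/k` lands exactly on `ρ(p*)`.
-/

open Finset

lemma pureProj_apply {d : ℕ} (v : Fin d → ℂ) (i j : Fin d) :
    pureProj v i j = v i * starRingEnd ℂ (v j) := by
  simp [pureProj, vecMulVec_apply]

lemma pureProj_psiPlus_apply {d : ℕ} (i j : Fin d) : pureProj (psiPlus d) i j = (d : ℂ)⁻¹ := by
  rw [pureProj_apply, psiPlus, psiPlus, Complex.conj_ofReal, ← Complex.ofReal_mul, ← mul_inv,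
    Real.mul_self_sqrt d.cast_nonneg]
  push_cast; rfl

def noisyPsiPlus (d : ℕ) (q : ℝ) : Matrix (Fin d) (Fin d) ℂ :=
  ((1 - q) / d) • (1 : Matrix (Fin d) (Fin d) ℂ) + q • pureProj (psiPlus d)

lemma noisyPsiPlus_apply {d : ℕ} (q : ℝ) (i j : Fin d) :
    noisyPsiPlus d q i j = if i = j then (d : ℂ)⁻¹ else q / d := by
  simp only [noisyPsiPlus, Matrix.add_apply, Matrix.smul_apply, one_apply,
    pureProj_psiPlus_apply, Complex.real_smul]
  split_ifs <;> push_cast <;> ring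

lemma smul_add_smul_noisyPsiPlus {d : ℕ} {a b : ℝ} (hab : a + b = 1) (q₀ q₁ : ℝ) :
    a • noisyPsiPlus d q₀ + b • noisyPsiPlus d q₁ = noisyPsiPlus d (a * q₀ + b * q₁) := by
  obtain rfl : b = 1 - a := by linarith
  ext i j
  simp only [Matrix.add_apply, Matrix.smul_apply, noisyPsiPlus_apply, Complex.real_smul]
  split_ifs <;> push_cast <;> ring

lemma convex_Ck (d k : ℕ) : Convex ℝ (Ck d k) := convex_convexHull ℝ _

lemma convex_setOf_noisyPsiPlus_mem_Ck (d k : ℕ) : Convex ℝ {q | noisyPsiPlus d q ∈ Ck d k} :=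
  fun _ h₀ _ h₁ _ _ ha hb hab => by
    rw [Set.mem_ofPred_eq, smul_eq_mul, smul_eq_mul, ← smul_add_smul_noisyPsiPlus hab]
    exact convex_Ck d k h₀ h₁ ha hb hab

lemma inv_one_add_smul_noisyPsiPlus {d : ℕ} {s : ℝ} (hs : 0 ≤ s) (q q' : ℝ) :
    (1 + s)⁻¹ • (noisyPsiPlus d q + s • noisyPsiPlus d q') =
      noisyPsiPlus d ((q + s * q') / (1 + s)) := by
  have hs' : (1 + s) ≠ 0 := by positivity
  rw [smul_add, smul_smul, smul_add_smul_noisyPsiPlus (by field_simp)]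
  congr 1
  field_simp

def entrySumRe (d : ℕ) : Matrix (Fin d) (Fin d) ℂ →ₗ[ℝ] ℝ where
  toFun M := (∑ i, ∑ j, M i j).re
  map_add' M N := by simp [sum_add_distrib]
  map_smul' r M := by simp [mul_sum]

lemma entrySumRe_pureProj {d : ℕ} (v : Fin d → ℂ) :
    entrySumRe d (pureProj v) = ‖∑ i, v i‖ ^ 2 := by
  simp only [entrySumRe, LinearMap.coe_mk, AddHom.coe_mk, pureProj_apply, ← sum_mul_sum,
    ← map_sum, Complex.mul_conj, Complex.normSq_eq_norm_sq, Complex.ofReal_re]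

lemma entrySumRe_noisyPsiPlus {d : ℕ} (hd : 0 < d) (q : ℝ) :
    entrySumRe d (noisyPsiPlus d q) = 1 + q * (d - 1) := by
  have hd' : (d : ℝ) ≠ 0 := by positivity
  have h₁ : entrySumRe d 1 = d := by simp [entrySumRe, one_apply, apply_ite Complex.re]
  have hP : entrySumRe d (pureProj (psiPlus d)) = d := by
    simp [entrySumRe, pureProj_psiPlus_apply, hd']
  rw [noisyPsiPlus, map_add, map_smul, map_smul, h₁, hP, smul_eq_mul, smul_eq_mul]
  field_simp
  ring

lemma norm_sum_sq_le_cohRank_mul {d : ℕ} (v : Fin d → ℂ) :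
    ‖∑ i, v i‖ ^ 2 ≤ cohRank v * ∑ i, ‖v i‖ ^ 2 := by
  set S := univ.filter (fun i => v i ≠ 0)
  calc ‖∑ i, v i‖ ^ 2 = ‖∑ i ∈ S, v i‖ ^ 2 := by rw [sum_filter_ne_zero]
    _ ≤ (∑ i ∈ S, ‖v i‖) ^ 2 := by gcongr; exact norm_sum_le _ _
    _ ≤ #S * ∑ i ∈ S, ‖v i‖ ^ 2 := sq_sum_le_card_mul_sum_sq
    _ ≤ cohRank v * ∑ i, ‖v i‖ ^ 2 := by gcongr; exacts [le_rfl, subset_univ S]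

lemma entrySumRe_le_of_mem_Ck {d k : ℕ} {M : Matrix (Fin d) (Fin d) ℂ} (hM : M ∈ Ck d k) :
    entrySumRe d M ≤ k := by
  refine convexHull_min ?_ (convex_halfSpace_le (entrySumRe d).isLinear (k : ℝ)) hM
  rintro _ ⟨v, hv, hrank, rfl⟩
  calc entrySumRe d (pureProj v) = ‖∑ i, v i‖ ^ 2 := entrySumRe_pureProj v
    _ ≤ cohRank v * ∑ i, ‖v i‖ ^ 2 := norm_sum_sq_le_cohRank_mul v
    _ ≤ k := by rw [hv, mul_one]; exact_mod_cast hrank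

lemma entrySumRe_nonneg {d : ℕ} {M : Matrix (Fin d) (Fin d) ℂ} (hM : M.PosSemidef) :
    0 ≤ entrySumRe d M := by
  have h := hM.dotProduct_mulVec_nonneg (fun _ => 1)
  simp only [dotProduct, mulVec, Pi.star_apply, star_one, one_mul, mul_one] at h
  exact (Complex.le_def.1 h).1

lemma pureProj_mul_self {d : ℕ} {v : Fin d → ℂ} (hv : ∑ i, ‖v i‖ ^ 2 = 1) :
    pureProj v * pureProj v = pureProj v := by
  have h : star v ⬝ᵥ v = 1 := by
    simp only [dotProduct, Pi.star_apply, Complex.star_def, mul_comm (starRingEnd ℂ _),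
      Complex.mul_conj, Complex.normSq_eq_norm_sq]
    exact_mod_cast hv
  rw [pureProj, vecMulVec_mul_vecMulVec, h, one_smul]

lemma posSemidef_one_sub_pureProj {d : ℕ} {v : Fin d → ℂ} (hv : ∑ i, ‖v i‖ ^ 2 = 1) :
    (1 - pureProj v).PosSemidef := by
  have hP : (pureProj v)ᴴ = pureProj v := (posSemidef_vecMulVec_self_star v).isHermitian
  have h : (1 - pureProj v)ᴴ * (1 - pureProj v) = 1 - pureProj v := by
    rw [conjTranspose_sub, conjTranspose_one, hP, sub_mul, mul_sub,
      mul_sub, pureProj_mul_self hv]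
    noncomm_ring
  exact h ▸ posSemidef_conjTranspose_mul_self _

lemma sum_norm_psiPlus_sq {d : ℕ} (hd : 0 < d) : ∑ i, ‖psiPlus d i‖ ^ 2 = 1 := by
  simp [psiPlus, Real.sq_sqrt, hd.ne']

lemma trace_noisyPsiPlus {d : ℕ} (hd : 0 < d) (q : ℝ) : (noisyPsiPlus d q).trace = 1 := by
  simp [trace, noisyPsiPlus_apply, hd.ne']

lemma noisyPsiPlus_antiCoherent {d : ℕ} (hd : 2 ≤ d) :
    noisyPsiPlus d (-1 / (d - 1)) = ((d : ℝ) - 1)⁻¹ • (1 - pureProj (psiPlus d)) := by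
  have hd₁ : (d : ℝ) - 1 ≠ 0 := (sub_pos.2 (by exact_mod_cast hd)).ne'
  rw [noisyPsiPlus, smul_sub, sub_eq_add_neg (_ • _), ← neg_smul]
  congr 2
  · field_simp; ring
  · ring

lemma isDensity_noisyPsiPlus_antiCoherent {d : ℕ} (hd : 2 ≤ d) :
    IsDensity (noisyPsiPlus d (-1 / (d - 1))) := by
  refine ⟨?_, trace_noisyPsiPlus (by omega) _⟩
  rw [noisyPsiPlus_antiCoherent hd]
  have hd₁ : (0 : ℝ) ≤ ((d : ℝ) - 1)⁻¹ := inv_nonneg.2 (sub_pos.2 (by exact_mod_cast hd)).le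
  exact (posSemidef_one_sub_pureProj (sum_norm_psiPlus_sq (by omega))).smul hd₁

def subsetState {d : ℕ} (S : Finset (Fin d)) : Fin d → ℂ :=
  fun i => if i ∈ S then ((√(#S : ℝ))⁻¹ : ℝ) else 0

lemma pureProj_subsetState_apply {d : ℕ} (S : Finset (Fin d)) (i j : Fin d) :
    pureProj (subsetState S) i j = if {i, j} ⊆ S then (#S : ℂ)⁻¹ else 0 := by
  simp only [pureProj_apply, subsetState, insert_subset_iff, singleton_subset_iff]
  split_ifs <;> simp_all [← Complex.ofReal_mul, ← mul_inv]

lemma sum_norm_subsetState_sq {d : ℕ} {S : Finset (Fin d)} (hS : S.Nonempty) :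
    ∑ i, ‖subsetState S i‖ ^ 2 = 1 := by
  simp [subsetState, apply_ite, sum_ite_mem, hS.card_pos.ne']

lemma cohRank_subsetState {d : ℕ} (S : Finset (Fin d)) : cohRank (subsetState S) = #S := by
  rw [cohRank]
  congr 1
  ext i
  by_cases hi : i ∈ S
  · simp [subsetState, hi, ne_empty_of_mem hi]
  · simp [subsetState, hi]

-- Stated multiplicatively so that it also covers `k < #A`, where both sides vanish.
lemma card_filter_powersetCard_superset_mul {α : Type*} [DecidableEq α] {A t : Finset α}
    (hAt : A ⊆ t) (k : ℕ) :
    #{S ∈ t.powersetCard k | A ⊆ S} * (#t).choose #A = (#t).choose k * k.choose #A := by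
  rcases le_or_gt #A k with hAk | hkA
  · rw [card_filter_powersetCard_subset A t k hAt hAk, Nat.choose_mul hAk, mul_comm]
  · rw [Nat.choose_eq_zero_of_lt hkA, mul_zero, filter_false_of_mem, card_empty, zero_mul]
    intro S hS hAS
    have := card_le_card hAS
    rw [(mem_powersetCard.1 hS).2] at this
    omega

lemma sum_pureProj_subsetState_apply {d : ℕ} (k : ℕ) (i j : Fin d) :
    (∑ S ∈ powersetCard k univ, pureProj (subsetState S)) i j =
      #{S ∈ powersetCard k (univ : Finset (Fin d)) | {i, j} ⊆ S} / k := by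
  rw [Matrix.sum_apply, sum_congr rfl fun S hS => by
    rw [pureProj_subsetState_apply, (mem_powersetCard.1 hS).2], sum_ite, sum_const_zero,
    add_zero, sum_const, nsmul_eq_mul, div_eq_mul_inv]

lemma noisyPsiPlus_threshold_mem_Ck {d k : ℕ} (hk : 1 ≤ k) (hkd : k ≤ d) :
    noisyPsiPlus d ((k - 1) / (d - 1)) ∈ Ck d k := by
  have ht : (#(powersetCard k (univ : Finset (Fin d))) : ℂ) = d.choose k := by simp
  have hchoose : (d.choose k : ℂ) ≠ 0 := by exact_mod_cast (Nat.choose_pos hkd).ne'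
  have hk₀ : (k : ℂ) ≠ 0 := by exact_mod_cast (by omega : k ≠ 0)
  have hmix : (powersetCard k univ).centerMass (fun _ => (1 : ℝ))
      (fun S => pureProj (subsetState S)) = noisyPsiPlus d ((k - 1) / (d - 1)) := by
    ext i j
    have hcount := card_filter_powersetCard_superset_mul (subset_univ {i, j}) k
    rw [centerMass, Matrix.smul_apply, sum_const, nsmul_eq_mul, mul_one]
    simp only [one_smul, sum_pureProj_subsetState_apply, noisyPsiPlus_apply, Complex.real_smul]
    split_ifs with hij
    · subst hij
      simp only [insert_eq_self.2 (mem_singleton_self i), card_singleton, card_univ,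
        Fintype.card_fin, Nat.choose_one_right] at hcount ⊢
      have hd₀ : (d : ℂ) ≠ 0 := by exact_mod_cast (by omega : d ≠ 0)
      push_cast [ht]
      field_simp
      exact_mod_cast hcount
    · rw [card_pair hij, card_univ, Fintype.card_fin] at hcount
      have hd₁ : (d : ℂ) - 1 ≠ 0 := by
        have : 2 ≤ d := by simpa [card_pair hij] using card_le_univ {i, j}
        rw [sub_ne_zero]; exact_mod_cast (by omega : d ≠ 1)
      have hd₀ : (d : ℂ) ≠ 0 := by exact_mod_cast (by omega : d ≠ 0)
      have hcountℂ := congrArg (Nat.cast : ℕ → ℂ) hcount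
      push_cast [Nat.cast_choose_two] at hcountℂ
      push_cast [ht]
      field_simp
      linear_combination 2 * hcountℂ
  rw [← hmix]
  refine centerMass_mem_convexHull _ (fun _ _ => zero_le_one) ?_ fun S hS => ?_
  · simpa using Nat.choose_pos hkd
  · have hSk := (mem_powersetCard.1 hS).2
    refine ⟨subsetState S, sum_norm_subsetState_sq (card_pos.1 (by omega)),
      (cohRank_subsetState S).trans_le hSk.le, rfl⟩

lemma Ck_mono {d k k' : ℕ} (hkk' : k ≤ k') : Ck d k ⊆ Ck d k' :=
  convexHull_mono fun _ ⟨v, hv, hrank, hM⟩ => ⟨v, hv, hrank.trans hkk', hM⟩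

lemma noisyPsiPlus_mem_Ck_of_le {d k : ℕ} (hk : 1 ≤ k) (hkd : k ≤ d) {p : ℝ} (hp₀ : 0 ≤ p)
    (hp : p ≤ (k - 1) / (d - 1)) : noisyPsiPlus d p ∈ Ck d k := by
  have h₀ : noisyPsiPlus d 0 ∈ Ck d k := by
    simpa using Ck_mono hk (noisyPsiPlus_threshold_mem_Ck le_rfl (hk.trans hkd))
  exact (convex_setOf_noisyPsiPlus_mem_Ck d k).ordConnected.out h₀
    (noisyPsiPlus_threshold_mem_Ck hk hkd) ⟨hp₀, hp⟩

lemma entrySumRe_le_of_mix_mem_Ck {d k : ℕ} {ρ τ : Matrix (Fin d) (Fin d) ℂ} {s : ℝ}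
    (hs : 0 ≤ s) (hτ : τ.PosSemidef) (h : (1 + s)⁻¹ • (ρ + s • τ) ∈ Ck d k) :
    entrySumRe d ρ ≤ k * (1 + s) := by
  have hle := entrySumRe_le_of_mem_Ck h
  rw [map_smul, map_add, map_smul, smul_eq_mul, smul_eq_mul,
    inv_mul_le_iff₀ (by positivity)] at hle
  linarith [mul_nonneg hs (entrySumRe_nonneg hτ)]

lemma noisyPsiPlus_mem_Ck_iff {d k : ℕ} (hd : 2 ≤ d) (hk : 1 ≤ k) (hkd : k ≤ d) {p : ℝ}
    (hp₀ : 0 ≤ p) : noisyPsiPlus d p ∈ Ck d k ↔ p ≤ (k - 1) / (d - 1) := by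
  refine ⟨fun h => ?_, noisyPsiPlus_mem_Ck_of_le hk hkd hp₀⟩
  have hle := entrySumRe_le_of_mem_Ck h
  rw [entrySumRe_noisyPsiPlus (by omega)] at hle
  have hd₁ : (0 : ℝ) < d - 1 := sub_pos.2 (by exact_mod_cast hd)
  rw [le_div_iff₀ hd₁]
  linarith

lemma RMC_noisyPsiPlus {d k : ℕ} (hd : 2 ≤ d) (hk : 1 ≤ k) (hkd : k ≤ d) {p : ℝ}
    (hp₀ : 0 ≤ p) : RMC k (noisyPsiPlus d p) = max 0 ((p * (d - 1) - (k - 1)) / k) := by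
  have hd₁ : (0 : ℝ) < d - 1 := sub_pos.2 (by exact_mod_cast hd)
  have hk₀ : (0 : ℝ) < k := by exact_mod_cast hk
  refine IsLeast.csInf_eq ⟨⟨le_max_left _ _, _, isDensity_noisyPsiPlus_antiCoherent hd, ?_⟩, ?_⟩
  · rcases le_total p ((k - 1) / (d - 1)) with hp | hp
    · have hs : (p * (d - 1) - (k - 1)) / k ≤ 0 := by
        rw [le_div_iff₀ hd₁] at hp
        exact div_nonpos_of_nonpos_of_nonneg (by linarith) hk₀.le
      rw [max_eq_left hs, zero_smul, add_zero, add_zero, inv_one, one_smul]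
      exact noisyPsiPlus_mem_Ck_of_le hk hkd hp₀ hp
    · have hs : 0 ≤ (p * (d - 1) - (k - 1)) / k := by
        rw [div_le_iff₀ hd₁] at hp
        exact div_nonneg (by linarith) hk₀.le
      rw [max_eq_right hs, inv_one_add_smul_noisyPsiPlus hs]
      convert noisyPsiPlus_threshold_mem_Ck hk hkd using 2
      rw [div_eq_div_iff (add_pos_of_pos_of_nonneg one_pos hs).ne' hd₁.ne']
      field_simp
      ring
  · rintro s ⟨hs, τ, hτ, hmem⟩
    have hle := entrySumRe_le_of_mix_mem_Ck hs hτ.1 hmem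
    rw [entrySumRe_noisyPsiPlus (by omega)] at hle
    refine max_le hs ?_
    rw [div_le_iff₀ hk₀]
    linarith

theorem stmt_17_general {d k : ℕ} (hd : 2 ≤ d) (hk : 1 ≤ k) (hkd : k ≤ d)
    (p : ℝ) (hp0 : 0 ≤ p)
    (ρ : Matrix (Fin d) (Fin d) ℂ)
    (hρdef : ρ = ((1 - p) / d) • (1 : Matrix (Fin d) (Fin d) ℂ) + p • pureProj (psiPlus d)) :
    RMC k ρ = max 0 ((p * ((d : ℝ) - 1) - ((k : ℝ) - 1)) / k) ∧
    (ρ ∈ Ck d k ↔ p ≤ ((k : ℝ) - 1) / ((d : ℝ) - 1)) := by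
  subst hρdef
  exact ⟨RMC_noisyPsiPlus hd hk hkd hp0, noisyPsiPlus_mem_Ck_iff hd hk hkd hp0⟩

/-- For the noisy maximally coherent state `ρ(p) = (1-p) I/d + p |ψ_d⁺⟩⟨ψ_d⁺|`, the
robustness of `(k+1)`-level coherence equals `max{0, (p(d-1)-(k-1))/k}`; in particular
`ρ(p) ∈ C_k` iff `p ≤ (k-1)/(d-1)`. -/
theorem stmt_17 {d k : ℕ} (hd : 2 ≤ d) (hk : 1 ≤ k) (hkd : k ≤ d)
    (p : ℝ) (hp0 : 0 ≤ p) (hp1 : p ≤ 1)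
    (ρ : Matrix (Fin d) (Fin d) ℂ)
    (hρdef : ρ = ((1 - p) / d) • (1 : Matrix (Fin d) (Fin d) ℂ) + p • pureProj (psiPlus d)) :
    RMC k ρ = max 0 ((p * ((d : ℝ) - 1) - ((k : ℝ) - 1)) / k) ∧
    (ρ ∈ Ck d k ↔ p ≤ ((k : ℝ) - 1) / ((d : ℝ) - 1)) :=
  stmt_17_general hd hk hkd p hp0 ρ hρdef
end
end
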